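/- arXiv:math/0701303 — 2 statements merged into one kernel-verified Lean document; each statement's English description precedes it below -/
import Mathlib

section
/- Let ρ ≥ 1 satisfy ρ = |F| + √(F² − 1) for some real F with |F| ≥ 1. If F = F(λ) with F(λ) = 1 + F′(λ*)(λ − λ*) + O((λ−λ*)²) near a point λ* where F(λ*) = 1 (or F(λ*) = −1, with appropriate signs), then (ln ρ(λ))² = 2|F′(λ*)| |λ − λ*| + O(|λ − λ*|^{3/2}) as λ → λ*. -/
open Filter Topology Asymptotics Real

/-!
`log ρ = arcosh |F|`, and `cosh t - 1 = t ^ 2 / 2 + O(t ^ 4)` gives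
`(arcosh a) ^ 2 = 2 (a - 1) + O((a - 1) ^ 2)`. On the regular side of `λ*`, `F(λ)` lies beyond
`F(λ*) = ±1`, so `|F(λ)| - 1 = |F(λ) - F(λ*)| = |F'(λ*)| |λ - λ*| + O((λ - λ*) ^ 2)`.
Hence the error is even `O(|λ - λ*| ^ 2)`.
-/

lemma abs_sq_sub_two_mul_cosh_sub_one_le (t : ℝ) :
    |t ^ 2 - 2 * (cosh t - 1)| ≤ 2 * (cosh t - 1) ^ 2 := by
  have hc : 1 ≤ cosh t := one_le_cosh t
  have hlow : t ^ 2 ≤ 2 * (cosh t - 1) := by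
    have hs : |t| / 2 ≤ sinh (|t| / 2) := self_le_sinh_iff.2 (by positivity)
    have hcosh : cosh |t| = 1 + 2 * sinh (|t| / 2) ^ 2 := by
      rw [← mul_div_cancel₀ |t| two_ne_zero, cosh_two_mul, cosh_sq]
      ring_nf
    rw [← cosh_abs, ← sq_abs, hcosh]
    nlinarith [pow_le_pow_left₀ (by positivity) hs 2]
  have hup : 2 * (1 - (cosh t)⁻¹) ≤ t ^ 2 := by
    have hlog : log (cosh t) ≤ t ^ 2 / 2 :=
      (log_le_iff_le_exp (by positivity)).2 (cosh_le_exp_half_sq t)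
    linarith [one_sub_inv_le_log_of_pos (by positivity : 0 < cosh t)]
  have hinv : (cosh t)⁻¹ ≤ 1 := inv_le_one_of_one_le₀ hc
  have hmul : cosh t * (cosh t)⁻¹ = 1 := mul_inv_cancel₀ (by positivity)
  rw [abs_le]
  constructor
  · nlinarith [mul_nonneg (sq_nonneg (cosh t - 1)) (sub_nonneg.2 hinv)]
  · nlinarith [sq_nonneg (cosh t - 1)]

lemma abs_arcosh_sq_sub_le {a : ℝ} (ha : 1 ≤ a) :
    |arcosh a ^ 2 - 2 * (a - 1)| ≤ 2 * (a - 1) ^ 2 := by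
  simpa only [cosh_arcosh ha] using abs_sq_sub_two_mul_cosh_sub_one_le (arcosh a)

lemma abs_sub_eq_abs_sub_one {x c : ℝ} (hc : |c| = 1) (hx : 1 < |x|) (hxc : |x - c| < 1) :
    |x - c| = |x| - 1 := by
  grind

theorem AnalyticAt.isBigO_sub_sub_smul_deriv {𝕜 E : Type*} [NontriviallyNormedField 𝕜]
    [NormedAddCommGroup E] [NormedSpace 𝕜 E] {f : 𝕜 → E} {a : 𝕜} (hf : AnalyticAt 𝕜 f a) :
    (fun x => f x - f a - (x - a) • deriv f a) =O[𝓝 a] fun x => ‖x - a‖ ^ 2 := by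
  obtain ⟨p, hp⟩ := hf
  have hsum (y : 𝕜) : p.partialSum 2 y = f a + y • deriv f a := by
    simp [FormalMultilinearSeries.partialSum, Finset.sum_range_succ, hp.deriv, ← hp.coeff_zero 0]
  have hlim : Tendsto (fun x => x - a) (𝓝 a) (𝓝 0) := tendsto_sub_nhds_zero_iff.2 tendsto_id
  have := (hp.isBigO_sub_partialSum_pow 2).comp_tendsto hlim
  simpa [Function.comp_def, hsum, sub_sub] using this

lemma sq_sub_isBigO_abs_sub_rpow {a p : ℝ} (hp : p ≤ 2) :
    (fun x => (x - a) ^ 2) =O[𝓝 a] fun x => |x - a| ^ p := by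
  have hsub : Tendsto (fun x => x - a) (𝓝 a) (𝓝 0) := tendsto_sub_nhds_zero_iff.2 tendsto_id
  have hlim : Tendsto (fun x => |x - a|) (𝓝 a) (𝓝[≥] 0) :=
    tendsto_nhdsWithin_iff.2 ⟨(continuous_abs.tendsto' 0 0 abs_zero).comp hsub,
      Eventually.of_forall fun x => abs_nonneg (x - a)⟩
  have := (IsBigO.rpow_rpow_nhdsGE_zero_of_le hp two_ne_zero).comp_tendsto hlim
  simpa [Function.comp_def, Real.rpow_two] using this

theorem stmt8_general (F : ℝ → ℝ) (l : ℝ) (hF : AnalyticAt ℝ F l) (hFl : |F l| = 1) :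
    (fun lam => (Real.log (|F lam| + Real.sqrt (F lam ^ 2 - 1))) ^ 2
        - 2 * |deriv F l| * |lam - l|)
      =O[𝓝[{x : ℝ | 1 < |F x|}] l] (fun lam => |lam - l| ^ (3 / 2 : ℝ)) := by
  set S := {x : ℝ | 1 < |F x|}
  have hclose : ∀ᶠ x in 𝓝 l, |F x - F l| < 1 :=
    hF.continuousAt.eventually (Metric.ball_mem_nhds (F l) one_pos)
  have hgap : ∀ᶠ x in 𝓝[S] l, |F x - F l| = |F x| - 1 := by
    filter_upwards [nhdsWithin_le_nhds hclose, self_mem_nhdsWithin] with x hx hxS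
    exact abs_sub_eq_abs_sub_one hFl hxS hx
  have hcosh : (fun x => arcosh |F x| ^ 2 - 2 * (|F x| - 1)) =O[𝓝[S] l] fun x => (x - l) ^ 2 := by
    have hbound : (fun x => arcosh |F x| ^ 2 - 2 * (|F x| - 1)) =O[𝓝[S] l]
        fun x => (F x - F l) ^ 2 := by
      refine .of_bound 2 ?_
      filter_upwards [hgap, self_mem_nhdsWithin] with x hx hxS
      simpa [← hx] using abs_arcosh_sq_sub_le hxS.le
    exact hbound.trans ((hF.differentiableAt.hasDerivAt.isBigO_sub.pow 2).mono nhdsWithin_le_nhds)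
  have hlin : (fun x => (|F x| - 1) - |deriv F l| * |x - l|) =O[𝓝[S] l]
      fun x => (x - l) ^ 2 := by
    have hbound : (fun x => (|F x| - 1) - |deriv F l| * |x - l|) =O[𝓝[S] l]
        fun x => F x - F l - (x - l) • deriv F l := by
      refine .of_bound' ?_
      filter_upwards [hgap] with x hx
      rw [← hx, ← abs_mul, mul_comm, smul_eq_mul]
      exact abs_abs_sub_abs_le_abs_sub _ _
    refine hbound.trans ((hF.isBigO_sub_sub_smul_deriv.mono nhdsWithin_le_nhds).trans_le ?_)
    simp
  refine ((hcosh.add (hlin.const_mul_left 2)).congr_left fun x => ?_).trans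
    ((sq_sub_isBigO_abs_sub_rpow (by norm_num)).mono nhdsWithin_le_nhds)
  rw [arcosh, sq_abs]
  ring

/-- For the multiplicator `ρ(λ) = |F(λ)| + √(F(λ)² - 1)` of the Hill operator,
with `F` real-analytic near a band edge `λ*` where `|F(λ*)| = 1` and `F'(λ*) ≠ 0`,
one has `(ln ρ(λ))² = 2 |F'(λ*)| |λ - λ*| + O(|λ - λ*|^{3/2})` as `λ → λ*`
through the regular points (where `|F(λ)| > 1`). -/
theorem stmt8 (F : ℝ → ℝ) (l : ℝ) (hF : AnalyticAt ℝ F l) (hFl : |F l| = 1)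
    (hd : deriv F l ≠ 0) :
    (fun lam => (Real.log (|F lam| + Real.sqrt (F lam ^ 2 - 1))) ^ 2
        - 2 * |deriv F l| * |lam - l|)
      =O[𝓝[{x : ℝ | 1 < |F x|}] l] (fun lam => |lam - l| ^ (3 / 2 : ℝ)) :=
  stmt8_general F l hF hFl
end

section
/- If F : ℝ → ℝ is continuous at λ* with |F(λ*)| = 1 and differentiable at λ*, and ρ(λ) = |F(λ)| + √(max(F(λ)² − 1, 0)), then ρ(λ) = 1 + √(2|F′(λ*)||λ − λ*|) + O(|λ − λ*|) as λ → λ* along points where |F(λ)| > 1, assuming F is C² near λ*. -/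
open Filter Topology Asymptotics

/-!
Write `u = |F λ| - 1 > 0`, so that `ρ - 1 = u + √(u² + 2u)`. Near `λ*` the function `F` keeps the
sign of `F λ*`, so `u = F λ* · (F λ - F λ*)`, and second-order Taylor expansion gives
`|u - |F' λ*| |λ - λ*|| = O(|λ - λ*|²)`; because `u ≥ 0`, the sign of `F' λ* (λ - λ*)` is irrelevant.
Hence `u = O(|λ - λ*|)` and `|√(u² + 2u) - √(2 |F' λ*| |λ - λ*|)| ≤ u + √(2 |u - |F' λ*| |λ - λ*||)`,
which is `O(|λ - λ*|)` as well.
-/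

theorem ContDiffAt.isBigO_sub_sub_fderiv {E F : Type*} [NormedAddCommGroup E] [NormedSpace ℝ E]
    [NormedAddCommGroup F] [NormedSpace ℝ F] {f : E → F} {a : E} (hf : ContDiffAt ℝ 2 f a) :
    (fun x => f x - f a - fderiv ℝ f a (x - a)) =O[𝓝 a] fun x => ‖x - a‖ ^ 2 := by
  set L := fderiv ℝ f a
  have hdiff : ∀ᶠ x in 𝓝 a, DifferentiableAt ℝ f x :=
    (hf.eventually (by simp)).mono fun x hx => hx.differentiableAt (by simp)
  have hfderiv : (fun x => fderiv ℝ f x - L) =ᶠ[𝓝 a] fderiv ℝ (fun y => f y - L y) :=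
    hdiff.mono fun x hx => (hx.hasFDerivAt.sub L.hasFDerivAt).fderiv.symm
  have hL : (fun x => fderiv ℝ f x - L) =O[𝓝 a] fun x => ‖x - a‖ ^ (1 : ℝ) := by
    simpa [isBigO_norm_right] using
      ((hf.fderiv_right (m := 1) le_rfl).differentiableAt one_ne_zero).isBigO_sub
  have := sub_isBigO_norm_rpow_add_one_of_fderiv zero_le_one
    (hdiff.mono fun x hx => hx.sub L.differentiableAt) (hL.congr' hfderiv (by rfl))
  norm_num at this
  simpa [sub_right_comm, sub_sub_sub_comm] using this

theorem Real.abs_sqrt_sub_sqrt_le {a b : ℝ} (ha : 0 ≤ a) (hb : 0 ≤ b) :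
    |√a - √b| ≤ √|a - b| := by
  refine (Real.le_sqrt (abs_nonneg _) (abs_nonneg _)).2 ?_
  calc |√a - √b| ^ 2 ≤ |√a - √b| * |√a + √b| := by
        rw [sq, abs_of_nonneg (by positivity : 0 ≤ √a + √b)]
        gcongr
        simpa only [abs_of_nonneg (Real.sqrt_nonneg _)] using abs_sub (√a) (√b)
    _ = |a - b| := by
        rw [← abs_mul, mul_comm, ← sq_sub_sq, Real.sq_sqrt ha, Real.sq_sqrt hb]

theorem Real.sqrt_sq_add_le {a b : ℝ} (ha : 0 ≤ a) (hb : 0 ≤ b) : √(a ^ 2 + b) ≤ a + √b :=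
  Real.sqrt_le_iff.2 ⟨by positivity, by nlinarith [Real.sq_sqrt hb, Real.sqrt_nonneg b]⟩

theorem abs_add_sqrt_sq_sub_one_sub_sqrt_le {b v : ℝ} (hb : 1 ≤ |b|) (hv : 0 ≤ v) :
    |(|b| + √(max (b ^ 2 - 1) 0)) - 1 - √(2 * v)| ≤ 2 * (|b| - 1) + √(2 * |(|b| - 1) - v|) := by
  set u := |b| - 1 with hu_def
  have hu : 0 ≤ u := by linarith
  have hmax : max (b ^ 2 - 1) 0 = u ^ 2 + 2 * u := by
    rw [max_eq_left (by nlinarith [sq_abs b]), ← sq_abs b, hu_def]; ring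
  calc |(|b| + √(max (b ^ 2 - 1) 0)) - 1 - √(2 * v)|
      = |u + (√(u ^ 2 + 2 * u) - √(2 * v))| := by rw [hmax, hu_def]; ring_nf
    _ ≤ u + √|u ^ 2 + 2 * u - 2 * v| := by
        grw [abs_add_le, abs_of_nonneg hu, Real.abs_sqrt_sub_sqrt_le (by positivity) (by positivity)]
    _ ≤ u + √(u ^ 2 + 2 * |u - v|) := by
        gcongr
        calc |u ^ 2 + 2 * u - 2 * v| = |u ^ 2 + 2 * (u - v)| := by ring_nf
          _ ≤ u ^ 2 + 2 * |u - v| := by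
            grw [abs_add_le, abs_mul, abs_two, abs_of_nonneg (sq_nonneg u)]
    _ ≤ u + (u + √(2 * |u - v|)) := by grw [Real.sqrt_sq_add_le hu (by positivity)]
    _ = 2 * u + √(2 * |u - v|) := by ring

theorem abs_sub_one_eq_mul_sub {a b : ℝ} (ha : |a| = 1) (hb : |b - a| < 1) :
    |b| - 1 = a * (b - a) := by
  rcases abs_lt.1 hb with ⟨hb₁, hb₂⟩
  rcases (abs_eq zero_le_one).1 ha with rfl | rfl
  · rw [abs_of_pos (by linarith)]; ring
  · rw [abs_of_neg (by linarith)]; ring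

theorem abs_abs_sub_one_sub_abs_mul_abs_le {a b d t : ℝ} (ha : |a| = 1) (hb : |b - a| < 1)
    (h1 : 1 ≤ |b|) : |(|b| - 1) - (|d| * |t|)| ≤ |b - a - d * t| :=
  calc |(|b| - 1) - (|d| * |t|)|
      = |(|a * (b - a)|) - (|a * (d * t)|)| := by
        rw [← abs_sub_one_eq_mul_sub ha hb, abs_of_nonneg (sub_nonneg.2 h1), abs_mul a, ha, one_mul,
          abs_mul]
    _ ≤ |a * (b - a) - a * (d * t)| := abs_abs_sub_abs_le_abs_sub _ _
    _ = |b - a - d * t| := by rw [← mul_sub, abs_mul, ha, one_mul]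

/-- If `F` is `C²` near `λ*` with `|F(λ*)| = 1`, and
`ρ(λ) = |F(λ)| + √(max(F(λ)² - 1, 0))`, then
`ρ(λ) = 1 + √(2 |F'(λ*)| |λ - λ*|) + O(|λ - λ*|)` as `λ → λ*`
through points where `|F(λ)| > 1`. -/
theorem stmt16 (F : ℝ → ℝ) (l : ℝ) (hF : ContDiffAt ℝ 2 F l) (hFl : |F l| = 1) :
    (fun lam => (|F lam| + Real.sqrt (max (F lam ^ 2 - 1) 0))
        - 1 - Real.sqrt (2 * |deriv F l| * |lam - l|))
      =O[𝓝[{x : ℝ | 1 < |F x|}] l] (fun lam => |lam - l|) := by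
  set S := {x : ℝ | 1 < |F x|}
  set d := deriv F l
  have hS : ∀ᶠ x in 𝓝[S] l, 1 < |F x| := self_mem_nhdsWithin
  have hnear : ∀ᶠ x in 𝓝[S] l, |F x - F l| < 1 := by
    have := Metric.tendsto_nhds.1 hF.continuousAt 1 one_pos
    simp only [Real.dist_eq] at this
    exact this.filter_mono nhdsWithin_le_nhds
  have htaylor : (fun x => F x - F l - d * (x - l)) =O[𝓝[S] l] fun x => |x - l| ^ 2 := by
    simpa [fderiv_eq_deriv_mul, mul_comm] using hF.isBigO_sub_sub_fderiv.mono nhdsWithin_le_nhds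
  have hclose : (fun x => (|F x| - 1) - |d| * |x - l|) =O[𝓝[S] l] fun x => |x - l| ^ 2 := by
    refine .trans (.of_bound' ?_) htaylor
    filter_upwards [hS, hnear] with x hxS hx
    exact abs_abs_sub_one_sub_abs_mul_abs_le hFl hx hxS.le
  have hsq : (fun x => |x - l| ^ 2) =O[𝓝[S] l] fun x => |x - l| := by
    simpa using ((isLittleO_pow_sub_sub l one_lt_two).isBigO.norm_right).mono nhdsWithin_le_nhds
  have hu : (fun x => |F x| - 1) =O[𝓝[S] l] fun x => |x - l| := by
    simpa using (hclose.trans hsq).add ((isBigO_refl _ _).const_mul_left |d|)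
  have hroot : (fun x => √(2 * |(|F x| - 1) - (|d| * |x - l|)|)) =O[𝓝[S] l] fun x => |x - l| := by
    simpa [Real.sqrt_sq_eq_abs] using
      (hclose.abs_left.const_mul_left 2).sqrt (.of_forall fun x => by positivity)
  refine .trans (.of_bound' ?_) ((hu.const_mul_left 2).add hroot)
  filter_upwards [hS] with x hx
  rw [mul_assoc]
  exact (abs_add_sqrt_sq_sub_one_sub_sqrt_le hx.le (by positivity)).trans (Real.le_norm_self _)
end
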